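/- The determinant of the Hessian matrix of F (the 3×3 matrix of second-order partial derivatives with respect to x1, x2, x4) at the point (1/2, 3/2, 1/2) equals 2·(2^{−n})^{3/(d+2n)}·n³; in particular it is positive, so the critical point (1/2, 3/2, 1/2) (corresponding to the Einstein metric g5) is non-degenerate. -/

import Mathlib

open Real

/-- Scalar curvature of the invariant metric `g = (x1,x2,x3,x4)` on `M = H×H/ΔK`,
where `d = dim K` and `n = dim H/K`. -/
noncomputable def Scal (d n x1 x2 x3 x4 : ℝ) : ℝ :=
  d / (2 * x3) -
    n * (x2 ^ 2 * x3 ^ 2 + x1 ^ 2 * (4 * x2 ^ 2 - 8 * x2 * x3 + x3 ^ 2)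
        + 8 * x2 * x3 * x4 ^ 2 + 8 * x1 * x3 * (x4 ^ 2 - x2 ^ 2)
        - 2 * x4 ^ 2 * (x3 ^ 2 + 2 * x4 ^ 2)) /
      (16 * x3 * (x4 ^ 2 - x1 * x2) ^ 2)

/-- Normalized scalar curvature `F(x1,x2,x4) = Scal(x1,x2,1,x4)·(x1·x2 − x4²)^{n/(d+2n)}`. -/
noncomputable def F (d n x1 x2 x4 : ℝ) : ℝ :=
  Scal d n x1 x2 1 x4 * (x1 * x2 - x4 ^ 2) ^ (n / (d + 2 * n))

/-- Partial derivative of a function of three real variables in the `i`-th variable. -/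
noncomputable def pd (i : Fin 3) (f : ℝ → ℝ → ℝ → ℝ) : ℝ → ℝ → ℝ → ℝ :=
  ![fun x y z => deriv (fun t => f t y z) x,
    fun x y z => deriv (fun t => f x t z) y,
    fun x y z => deriv (fun t => f x y t) z] i

/-- Hessian matrix of second-order partial derivatives at `(x, y, z)`. -/
noncomputable def Hess (f : ℝ → ℝ → ℝ → ℝ) (x y z : ℝ) : Matrix (Fin 3) (Fin 3) ℝ :=
  Matrix.of fun i j => pd i (pd j f) x y z

noncomputable def Mf (d n x1 x2 x4 : ℝ) : ℝ :=
  (8*d*(x1*x2 - x4^2)^2 - n*(x2^2 + x1^2*(4*x2^2 - 8*x2 + 1) + 8*x2*x4^2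
    + 8*x1*(x4^2 - x2^2) - 2*x4^2*(1 + 2*x4^2)))/16

lemma hda_quintic (g a b c e f t : ℝ) :
    HasDerivAt (fun x : ℝ => g*x^5+a*x^4+b*x^3+c*x^2+e*x+f)
      (5*g*t^4+4*a*t^3+3*b*t^2+2*c*t+e) t := by
  have h0 : HasDerivAt (fun x : ℝ => x^5) (5*t^4) t := by simpa using hasDerivAt_pow 5 t
  have h1 : HasDerivAt (fun x : ℝ => x^4) (4*t^3) t := by simpa using hasDerivAt_pow 4 t
  have h2 : HasDerivAt (fun x : ℝ => x^3) (3*t^2) t := by simpa using hasDerivAt_pow 3 t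
  have h3 : HasDerivAt (fun x : ℝ => x^2) (2*t) t := by simpa using hasDerivAt_pow 2 t
  have h4 : HasDerivAt (fun x : ℝ => x) 1 t := hasDerivAt_id t
  have h := ((((h0.const_mul g).add (h1.const_mul a)).add (h2.const_mul b)).add
      (h3.const_mul c)).add ((h4.const_mul e).add_const f)
  have heq : (fun x : ℝ => g*x^5+a*x^4+b*x^3+c*x^2+e*x+f)
      = (fun x : ℝ => (((g*x^5 + a*x^4) + b*x^3) + c*x^2) + (e*x + f)) := by funext x; ring
  rw [heq]
  refine h.congr_deriv ?_
  ring

lemma hda_quad (A B C t : ℝ) :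
    HasDerivAt (fun x : ℝ => A*x^2+B*x+C) (2*A*t+B) t := by
  have h3 : HasDerivAt (fun x : ℝ => x^2) (2*t) t := by simpa using hasDerivAt_pow 2 t
  have h4 : HasDerivAt (fun x : ℝ => x) 1 t := hasDerivAt_id t
  have h := (h3.const_mul A).add ((h4.const_mul B).add_const C)
  have heq : (fun x : ℝ => A*x^2+B*x+C) = (fun x : ℝ => A*x^2 + (B*x + C)) := by funext x; ring
  rw [heq]
  refine h.congr_deriv ?_
  ring

lemma key (g a b c e f A B C β t : ℝ) (h : 0 < A*t^2+B*t+C) :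
    HasDerivAt (fun x : ℝ => (g*x^5+a*x^4+b*x^3+c*x^2+e*x+f) * (A*x^2+B*x+C) ^ β)
      ((5*g*t^4+4*a*t^3+3*b*t^2+2*c*t+e) * (A*t^2+B*t+C) ^ β
        + (g*t^5+a*t^4+b*t^3+c*t^2+e*t+f) * ((2*A*t+B) * β * (A*t^2+B*t+C) ^ (β-1))) t :=
  (hda_quintic g a b c e f t).mul ((hda_quad A B C t).rpow_const (Or.inl h.ne'))

lemma F_eq (d n x1 x2 x4 : ℝ) (hp : 0 < x1*x2 - x4^2) :
    F d n x1 x2 x4 = Mf d n x1 x2 x4 * (x1*x2 - x4^2) ^ (n/(d+2*n) - 2) := by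
  have h2 : (x1*x2 - x4^2) ^ (n/(d+2*n) - 2)
      = (x1*x2 - x4^2) ^ (n/(d+2*n)) / (x1*x2 - x4^2)^2 := by
    rw [eq_div_iff (pow_ne_zero 2 hp.ne'), ← Real.rpow_natCast (x1*x2 - x4^2) 2,
      ← Real.rpow_add hp]
    norm_num
  have h3 : x4^2 - x1*x2 ≠ 0 := by
    have : x4^2 - x1*x2 < 0 := by linarith
    exact this.ne
  rw [F, Scal, Mf, h2]
  have hD : (x1*x2 - x4^2)^2 * ((x4^2 - x1*x2)^2)⁻¹ = 1 := by
    rw [show (x4^2 - x1*x2)^2 = (x1*x2 - x4^2)^2 by ring]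
    exact mul_inv_cancel₀ (pow_ne_zero 2 hp.ne')
  generalize (x1*x2 - x4^2) ^ (n/(d+2*n)) = P
  field_simp
  linear_combination (-16*d*P) * hD
noncomputable def G1 (d n a x1 x2 x4 : ℝ) : ℝ :=
  ((1/2)*x4^4*n + (-1/4)*x2*x4^2*n + (1/8)*x2*x4^2*n*a + (-1/2)*x2*x4^4*n + (1/4)*x2*x4^4*n*a + (1/2)*x2*x4^4*d*a + (1/2)*x2^2*x4^2*n + (-1/2)*x2^2*x4^2*n*a + (1/8)*x2^3*n + (-1/16)*x2^3*n*a + (1/8)*x1*x4^2*n + (-1/2)*x1*x2*x4^2*n + (-1/2)*x1*x2*x4^2*n*a + (1/2)*x1*x2^2*x4^2*n + (-1)*x1*x2^2*x4^2*d*a + (-1/2)*x1*x2^3*n + (1/2)*x1*x2^3*n*a + (-1/16)*x1^2*x2*n*a + (1/2)*x1^2*x2^2*n*a + (-1/4)*x1^2*x2^3*n*a + (1/2)*x1^2*x2^3*d*a)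

noncomputable def G2 (d n a x1 x2 x4 : ℝ) : ℝ :=
  ((1/2)*x4^4*n + (1/8)*x2*x4^2*n + (-1/4)*x1*x4^2*n + (1/8)*x1*x4^2*n*a + (-1/2)*x1*x4^4*n + (1/4)*x1*x4^4*n*a + (1/2)*x1*x4^4*d*a + (-1/2)*x1*x2*x4^2*n + (-1/2)*x1*x2*x4^2*n*a + (-1/16)*x1*x2^2*n*a + (1/2)*x1^2*x4^2*n + (-1/2)*x1^2*x4^2*n*a + (1/2)*x1^2*x2*x4^2*n + (-1)*x1^2*x2*x4^2*d*a + (1/2)*x1^2*x2^2*n*a + (1/8)*x1^3*n + (-1/16)*x1^3*n*a + (-1/2)*x1^3*x2*n + (1/2)*x1^3*x2*n*a + (-1/4)*x1^3*x2^2*n*a + (1/2)*x1^3*x2^2*d*a)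

noncomputable def G4 (d n a x1 x2 x4 : ℝ) : ℝ :=
  ((1/4)*x4^3*n + (-1/4)*x4^3*n*a + (-1/2)*x4^5*n*a + (-1)*x4^5*d*a + (-1)*x2*x4^3*n + 1*x2*x4^3*n*a + (-1/4)*x2^2*x4*n + (1/8)*x2^2*x4*n*a + (-1)*x1*x4^3*n + 1*x1*x4^3*n*a + (1/4)*x1*x2*x4*n + 1*x1*x2*x4^3*n + 2*x1*x2*x4^3*d*a + 1*x1*x2^2*x4*n + (-1)*x1*x2^2*x4*n*a + (-1/4)*x1^2*x4*n + (1/8)*x1^2*x4*n*a + 1*x1^2*x2*x4*n + (-1)*x1^2*x2*x4*n*a + (-1)*x1^2*x2^2*x4*n + (1/2)*x1^2*x2^2*x4*n*a + (-1)*x1^2*x2^2*x4*d*a)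

noncomputable def P1 (d n x1 x2 x4 : ℝ) : ℝ :=
  G1 d n (n/(d+2*n)) x1 x2 x4 * (x1*x2 - x4^2) ^ ((n/(d+2*n)) - 3)

noncomputable def P2 (d n x1 x2 x4 : ℝ) : ℝ :=
  G2 d n (n/(d+2*n)) x1 x2 x4 * (x1*x2 - x4^2) ^ ((n/(d+2*n)) - 3)

noncomputable def P4 (d n x1 x2 x4 : ℝ) : ℝ :=
  G4 d n (n/(d+2*n)) x1 x2 x4 * (x1*x2 - x4^2) ^ ((n/(d+2*n)) - 3)

lemma pd0_apply (f : ℝ → ℝ → ℝ → ℝ) (x y z : ℝ) :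
    pd 0 f x y z = deriv (fun t => f t y z) x := rfl

lemma pd1_apply (f : ℝ → ℝ → ℝ → ℝ) (x y z : ℝ) :
    pd 1 f x y z = deriv (fun t => f x t z) y := rfl

lemma pd2_apply (f : ℝ → ℝ → ℝ → ℝ) (x y z : ℝ) :
    pd 2 f x y z = deriv (fun t => f x y t) z := rfl

lemma pdF0 (d n x1 x2 x4 : ℝ) (hp : 0 < x1*x2 - x4^2) :
    pd 0 (F d n) x1 x2 x4 = P1 d n x1 x2 x4 := by
  rw [pd0_apply]
  have hev : (fun t => F d n t x2 x4) =ᶠ[nhds x1]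
      (fun t => Mf d n t x2 x4 * (t*x2 - x4^2) ^ ((n/(d+2*n)) - 2)) := by
    have hpos : ∀ᶠ t in nhds x1, (0:ℝ) < t*x2 - x4^2 := by
      have hc : ContinuousAt (fun t : ℝ => t*x2 - x4^2) x1 := by fun_prop
      exact ContinuousAt.eventually_lt continuousAt_const hc (by simpa using hp)
    filter_upwards [hpos] with t ht
    exact F_eq d n t x2 x4 ht
  have hkey := key (0 : ℝ) (0 : ℝ) (0 : ℝ) ((-1/16)*n + (1/2)*x2*n + (-1/4)*x2^2*n + (1/2)*x2^2*d) ((-1/2)*x4^2*n + (-1)*x2*x4^2*d + (1/2)*x2^2*n) ((1/8)*x4^2*n + (1/4)*x4^4*n + (1/2)*x4^4*d + (-1/2)*x2*x4^2*n + (-1/16)*x2^2*n) 0 x2 (-(x4^2)) ((n/(d+2*n)) - 2) x1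
      (by rw [show 0*x1^2+x2*x1+(-(x4^2)) = x1*x2 - x4^2 from by ring]; exact hp)
  have hfun : (fun x : ℝ => ((0 : ℝ)*x^5+(0 : ℝ)*x^4+(0 : ℝ)*x^3+((-1/16)*n + (1/2)*x2*n + (-1/4)*x2^2*n + (1/2)*x2^2*d)*x^2+((-1/2)*x4^2*n + (-1)*x2*x4^2*d + (1/2)*x2^2*n)*x+((1/8)*x4^2*n + (1/4)*x4^4*n + (1/2)*x4^4*d + (-1/2)*x2*x4^2*n + (-1/16)*x2^2*n)) * (0*x^2+x2*x+(-(x4^2))) ^ ((n/(d+2*n)) - 2))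
      = (fun x => Mf d n x x2 x4 * (x*x2 - x4^2) ^ ((n/(d+2*n)) - 2)) := by
    funext x
    rw [show 0*x^2+x2*x+(-(x4^2)) = x*x2 - x4^2 from by ring]
    simp only [Mf]
    ring
  rw [hfun] at hkey
  have h2 := hkey.congr_of_eventuallyEq hev
  rw [h2.deriv]
  simp only [P1, G1]
  rw [show 0*x1^2+x2*x1+(-(x4^2)) = x1*x2 - x4^2 from by ring]
  rw [show (n/(d+2*n)) - 2 - 1 = (n/(d+2*n)) - 3 from by ring]
  rw [show (n/(d+2*n)) - 2 = ((n/(d+2*n)) - 3) + 1 from by ring]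
  rw [Real.rpow_add hp, Real.rpow_one]
  ring

lemma pdF1 (d n x1 x2 x4 : ℝ) (hp : 0 < x1*x2 - x4^2) :
    pd 1 (F d n) x1 x2 x4 = P2 d n x1 x2 x4 := by
  rw [pd1_apply]
  have hev : (fun t => F d n x1 t x4) =ᶠ[nhds x2]
      (fun t => Mf d n x1 t x4 * (x1*t - x4^2) ^ ((n/(d+2*n)) - 2)) := by
    have hpos : ∀ᶠ t in nhds x2, (0:ℝ) < x1*t - x4^2 := by
      have hc : ContinuousAt (fun t : ℝ => x1*t - x4^2) x2 := by fun_prop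
      exact ContinuousAt.eventually_lt continuousAt_const hc (by simpa using hp)
    filter_upwards [hpos] with t ht
    exact F_eq d n x1 t x4 ht
  have hkey := key (0 : ℝ) (0 : ℝ) (0 : ℝ) ((-1/16)*n + (1/2)*x1*n + (-1/4)*x1^2*n + (1/2)*x1^2*d) ((-1/2)*x4^2*n + (-1)*x1*x4^2*d + (1/2)*x1^2*n) ((1/8)*x4^2*n + (1/4)*x4^4*n + (1/2)*x4^4*d + (-1/2)*x1*x4^2*n + (-1/16)*x1^2*n) 0 x1 (-(x4^2)) ((n/(d+2*n)) - 2) x2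
      (by rw [show 0*x2^2+x1*x2+(-(x4^2)) = x1*x2 - x4^2 from by ring]; exact hp)
  have hfun : (fun x : ℝ => ((0 : ℝ)*x^5+(0 : ℝ)*x^4+(0 : ℝ)*x^3+((-1/16)*n + (1/2)*x1*n + (-1/4)*x1^2*n + (1/2)*x1^2*d)*x^2+((-1/2)*x4^2*n + (-1)*x1*x4^2*d + (1/2)*x1^2*n)*x+((1/8)*x4^2*n + (1/4)*x4^4*n + (1/2)*x4^4*d + (-1/2)*x1*x4^2*n + (-1/16)*x1^2*n)) * (0*x^2+x1*x+(-(x4^2))) ^ ((n/(d+2*n)) - 2))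
      = (fun x => Mf d n x1 x x4 * (x1*x - x4^2) ^ ((n/(d+2*n)) - 2)) := by
    funext x
    rw [show 0*x^2+x1*x+(-(x4^2)) = x1*x - x4^2 from by ring]
    simp only [Mf]
    ring
  rw [hfun] at hkey
  have h2 := hkey.congr_of_eventuallyEq hev
  rw [h2.deriv]
  simp only [P2, G2]
  rw [show 0*x2^2+x1*x2+(-(x4^2)) = x1*x2 - x4^2 from by ring]
  rw [show (n/(d+2*n)) - 2 - 1 = (n/(d+2*n)) - 3 from by ring]
  rw [show (n/(d+2*n)) - 2 = ((n/(d+2*n)) - 3) + 1 from by ring]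
  rw [Real.rpow_add hp, Real.rpow_one]
  ring

lemma pdF2 (d n x1 x2 x4 : ℝ) (hp : 0 < x1*x2 - x4^2) :
    pd 2 (F d n) x1 x2 x4 = P4 d n x1 x2 x4 := by
  rw [pd2_apply]
  have hev : (fun t => F d n x1 x2 t) =ᶠ[nhds x4]
      (fun t => Mf d n x1 x2 t * (x1*x2 - t^2) ^ ((n/(d+2*n)) - 2)) := by
    have hpos : ∀ᶠ t in nhds x4, (0:ℝ) < x1*x2 - t^2 := by
      have hc : ContinuousAt (fun t : ℝ => x1*x2 - t^2) x4 := by fun_prop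
      exact ContinuousAt.eventually_lt continuousAt_const hc (by simpa using hp)
    filter_upwards [hpos] with t ht
    exact F_eq d n x1 x2 t ht
  have hkey := key (0 : ℝ) ((1/4)*n + (1/2)*d) (0 : ℝ) ((1/8)*n + (-1/2)*x2*n + (-1/2)*x1*n + (-1)*x1*x2*d) (0 : ℝ) ((-1/16)*x2^2*n + (1/2)*x1*x2^2*n + (-1/16)*x1^2*n + (1/2)*x1^2*x2*n + (-1/4)*x1^2*x2^2*n + (1/2)*x1^2*x2^2*d) (-1) 0 (x1*x2) ((n/(d+2*n)) - 2) x4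
      (by rw [show (-1)*x4^2+0*x4+(x1*x2) = x1*x2 - x4^2 from by ring]; exact hp)
  have hfun : (fun x : ℝ => ((0 : ℝ)*x^5+((1/4)*n + (1/2)*d)*x^4+(0 : ℝ)*x^3+((1/8)*n + (-1/2)*x2*n + (-1/2)*x1*n + (-1)*x1*x2*d)*x^2+(0 : ℝ)*x+((-1/16)*x2^2*n + (1/2)*x1*x2^2*n + (-1/16)*x1^2*n + (1/2)*x1^2*x2*n + (-1/4)*x1^2*x2^2*n + (1/2)*x1^2*x2^2*d)) * ((-1)*x^2+0*x+(x1*x2)) ^ ((n/(d+2*n)) - 2))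
      = (fun x => Mf d n x1 x2 x * (x1*x2 - x^2) ^ ((n/(d+2*n)) - 2)) := by
    funext x
    rw [show (-1)*x^2+0*x+(x1*x2) = x1*x2 - x^2 from by ring]
    simp only [Mf]
    ring
  rw [hfun] at hkey
  have h2 := hkey.congr_of_eventuallyEq hev
  rw [h2.deriv]
  simp only [P4, G4]
  rw [show (-1)*x4^2+0*x4+(x1*x2) = x1*x2 - x4^2 from by ring]
  rw [show (n/(d+2*n)) - 2 - 1 = (n/(d+2*n)) - 3 from by ring]
  rw [show (n/(d+2*n)) - 2 = ((n/(d+2*n)) - 3) + 1 from by ring]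
  rw [Real.rpow_add hp, Real.rpow_one]
  ring

lemma entry00 (d n : ℝ) :
    pd 0 (pd 0 (F d n)) (1/2) (3/2) (1/2)
      = ((1/16)*n + (-9/8)*n*(n/(d+2*n)) + (9/16)*n*(n/(d+2*n))^2 + (-9/32)*d*(n/(d+2*n)) + (9/32)*d*(n/(d+2*n))^2) * ((1/2:ℝ)) ^ ((n/(d+2*n)) - 4) := by
  rw [pd0_apply]
  have hev : (fun t : ℝ => pd 0 (F d n) t (3/2) (1/2)) =ᶠ[nhds ((1/2) : ℝ)]
      (fun t : ℝ => P1 d n t (3/2) (1/2)) := by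
    have hpos : ∀ᶠ t in nhds ((1/2) : ℝ), (0:ℝ) < t * (3/2) - (1/2:ℝ)^2 := by
      have hc : ContinuousAt (fun t : ℝ => t * (3/2) - (1/2:ℝ)^2) ((1/2) : ℝ) := by fun_prop
      exact ContinuousAt.eventually_lt continuousAt_const hc (by norm_num)
    filter_upwards [hpos] with t ht
    exact pdF0 d n t (3/2) (1/2) (by linarith [ht])
  rw [hev.deriv_eq]
  have hkey := key (0 : ℝ) (0 : ℝ) (0 : ℝ) ((3/16)*n*(n/(d+2*n)) + (27/16)*d*(n/(d+2*n))) ((-25/16)*n + (3/2)*n*(n/(d+2*n)) + (-9/16)*d*(n/(d+2*n))) ((19/32)*n + (-27/64)*n*(n/(d+2*n)) + (3/64)*d*(n/(d+2*n))) 0 (3/2) (-(1/4)) ((n/(d+2*n)) - 3) ((1/2) : ℝ)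
      (by norm_num)
  have hfun : (fun x : ℝ => ((0 : ℝ)*x^5+(0 : ℝ)*x^4+(0 : ℝ)*x^3+((3/16)*n*(n/(d+2*n)) + (27/16)*d*(n/(d+2*n)))*x^2+((-25/16)*n + (3/2)*n*(n/(d+2*n)) + (-9/16)*d*(n/(d+2*n)))*x+((19/32)*n + (-27/64)*n*(n/(d+2*n)) + (3/64)*d*(n/(d+2*n)))) * (0*x^2+(3/2)*x+(-(1/4))) ^ ((n/(d+2*n)) - 3))
      = (fun x : ℝ => P1 d n x (3/2) (1/2)) := by
    funext x
    simp only [P1, G1]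
    rw [show 0*x^2+(3/2)*x+(-(1/4)) = x * (3/2) - (1/2:ℝ)^2 from by ring]
    ring
  rw [hfun] at hkey
  rw [hkey.deriv]
  rw [show 0*(1/2:ℝ)^2+(3/2)*(1/2:ℝ)+(-(1/4)) = (1/2:ℝ) from by norm_num]
  rw [show (n/(d+2*n)) - 3 - 1 = (n/(d+2*n)) - 4 from by ring]
  rw [show (n/(d+2*n)) - 3 = ((n/(d+2*n)) - 4) + 1 from by ring]
  rw [Real.rpow_add (by norm_num : (0:ℝ) < 1/2), Real.rpow_one]
  ring

lemma entry01 (d n : ℝ) :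
    pd 0 (pd 1 (F d n)) (1/2) (3/2) (1/2)
      = ((1/16)*n + (-1/4)*n*(n/(d+2*n)) + (3/16)*n*(n/(d+2*n))^2 + (-1/32)*d*(n/(d+2*n)) + (3/32)*d*(n/(d+2*n))^2) * ((1/2:ℝ)) ^ ((n/(d+2*n)) - 4) := by
  rw [pd0_apply]
  have hev : (fun t : ℝ => pd 1 (F d n) t (3/2) (1/2)) =ᶠ[nhds ((1/2) : ℝ)]
      (fun t : ℝ => P2 d n t (3/2) (1/2)) := by
    have hpos : ∀ᶠ t in nhds ((1/2) : ℝ), (0:ℝ) < t * (3/2) - (1/2:ℝ)^2 := by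
      have hc : ContinuousAt (fun t : ℝ => t * (3/2) - (1/2:ℝ)^2) ((1/2) : ℝ) := by fun_prop
      exact ContinuousAt.eventually_lt continuousAt_const hc (by norm_num)
    filter_upwards [hpos] with t ht
    exact pdF1 d n t (3/2) (1/2) (by linarith [ht])
  rw [hev.deriv_eq]
  have hkey := key (0 : ℝ) (0 : ℝ) ((-5/8)*n + (1/8)*n*(n/(d+2*n)) + (9/8)*d*(n/(d+2*n))) ((5/16)*n + 1*n*(n/(d+2*n)) + (-3/8)*d*(n/(d+2*n))) ((-9/32)*n + (-9/32)*n*(n/(d+2*n)) + (1/32)*d*(n/(d+2*n))) ((5/64)*n) 0 (3/2) (-(1/4)) ((n/(d+2*n)) - 3) ((1/2) : ℝ)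
      (by norm_num)
  have hfun : (fun x : ℝ => ((0 : ℝ)*x^5+(0 : ℝ)*x^4+((-5/8)*n + (1/8)*n*(n/(d+2*n)) + (9/8)*d*(n/(d+2*n)))*x^3+((5/16)*n + 1*n*(n/(d+2*n)) + (-3/8)*d*(n/(d+2*n)))*x^2+((-9/32)*n + (-9/32)*n*(n/(d+2*n)) + (1/32)*d*(n/(d+2*n)))*x+((5/64)*n)) * (0*x^2+(3/2)*x+(-(1/4))) ^ ((n/(d+2*n)) - 3))
      = (fun x : ℝ => P2 d n x (3/2) (1/2)) := by
    funext x
    simp only [P2, G2]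
    rw [show 0*x^2+(3/2)*x+(-(1/4)) = x * (3/2) - (1/2:ℝ)^2 from by ring]
    ring
  rw [hfun] at hkey
  rw [hkey.deriv]
  rw [show 0*(1/2:ℝ)^2+(3/2)*(1/2:ℝ)+(-(1/4)) = (1/2:ℝ) from by norm_num]
  rw [show (n/(d+2*n)) - 3 - 1 = (n/(d+2*n)) - 4 from by ring]
  rw [show (n/(d+2*n)) - 3 = ((n/(d+2*n)) - 4) + 1 from by ring]
  rw [Real.rpow_add (by norm_num : (0:ℝ) < 1/2), Real.rpow_one]
  ring

lemma entry02 (d n : ℝ) :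
    pd 0 (pd 2 (F d n)) (1/2) (3/2) (1/2)
      = ((-1/8)*n + (3/4)*n*(n/(d+2*n)) + (-3/8)*n*(n/(d+2*n))^2 + (3/16)*d*(n/(d+2*n)) + (-3/16)*d*(n/(d+2*n))^2) * ((1/2:ℝ)) ^ ((n/(d+2*n)) - 4) := by
  rw [pd0_apply]
  have hev : (fun t : ℝ => pd 2 (F d n) t (3/2) (1/2)) =ᶠ[nhds ((1/2) : ℝ)]
      (fun t : ℝ => P4 d n t (3/2) (1/2)) := by
    have hpos : ∀ᶠ t in nhds ((1/2) : ℝ), (0:ℝ) < t * (3/2) - (1/2:ℝ)^2 := by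
      have hc : ContinuousAt (fun t : ℝ => t * (3/2) - (1/2:ℝ)^2) ((1/2) : ℝ) := by fun_prop
      exact ContinuousAt.eventually_lt continuousAt_const hc (by norm_num)
    filter_upwards [hpos] with t ht
    exact pdF2 d n t (3/2) (1/2) (by linarith [ht])
  rw [hev.deriv_eq]
  have hkey := key (0 : ℝ) (0 : ℝ) (0 : ℝ) ((-1/2)*n + (-1/8)*n*(n/(d+2*n)) + (-9/8)*d*(n/(d+2*n))) ((11/8)*n + (-1)*n*(n/(d+2*n)) + (3/8)*d*(n/(d+2*n))) ((-7/16)*n + (9/32)*n*(n/(d+2*n)) + (-1/32)*d*(n/(d+2*n))) 0 (3/2) (-(1/4)) ((n/(d+2*n)) - 3) ((1/2) : ℝ)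
      (by norm_num)
  have hfun : (fun x : ℝ => ((0 : ℝ)*x^5+(0 : ℝ)*x^4+(0 : ℝ)*x^3+((-1/2)*n + (-1/8)*n*(n/(d+2*n)) + (-9/8)*d*(n/(d+2*n)))*x^2+((11/8)*n + (-1)*n*(n/(d+2*n)) + (3/8)*d*(n/(d+2*n)))*x+((-7/16)*n + (9/32)*n*(n/(d+2*n)) + (-1/32)*d*(n/(d+2*n)))) * (0*x^2+(3/2)*x+(-(1/4))) ^ ((n/(d+2*n)) - 3))
      = (fun x : ℝ => P4 d n x (3/2) (1/2)) := by
    funext x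
    simp only [P4, G4]
    rw [show 0*x^2+(3/2)*x+(-(1/4)) = x * (3/2) - (1/2:ℝ)^2 from by ring]
    ring
  rw [hfun] at hkey
  rw [hkey.deriv]
  rw [show 0*(1/2:ℝ)^2+(3/2)*(1/2:ℝ)+(-(1/4)) = (1/2:ℝ) from by norm_num]
  rw [show (n/(d+2*n)) - 3 - 1 = (n/(d+2*n)) - 4 from by ring]
  rw [show (n/(d+2*n)) - 3 = ((n/(d+2*n)) - 4) + 1 from by ring]
  rw [Real.rpow_add (by norm_num : (0:ℝ) < 1/2), Real.rpow_one]
  ring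

lemma entry10 (d n : ℝ) :
    pd 1 (pd 0 (F d n)) (1/2) (3/2) (1/2)
      = ((1/16)*n + (-1/4)*n*(n/(d+2*n)) + (3/16)*n*(n/(d+2*n))^2 + (-1/32)*d*(n/(d+2*n)) + (3/32)*d*(n/(d+2*n))^2) * ((1/2:ℝ)) ^ ((n/(d+2*n)) - 4) := by
  rw [pd1_apply]
  have hev : (fun t : ℝ => pd 0 (F d n) (1/2) t (1/2)) =ᶠ[nhds ((3/2) : ℝ)]
      (fun t : ℝ => P1 d n (1/2) t (1/2)) := by
    have hpos : ∀ᶠ t in nhds ((3/2) : ℝ), (0:ℝ) < (1/2) * t - (1/2:ℝ)^2 := by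
      have hc : ContinuousAt (fun t : ℝ => (1/2) * t - (1/2:ℝ)^2) ((3/2) : ℝ) := by fun_prop
      exact ContinuousAt.eventually_lt continuousAt_const hc (by norm_num)
    filter_upwards [hpos] with t ht
    exact pdF0 d n (1/2) t (1/2) (by linarith [ht])
  rw [hev.deriv_eq]
  have hkey := key (0 : ℝ) (0 : ℝ) ((-1/8)*n + (1/8)*n*(n/(d+2*n)) + (1/8)*d*(n/(d+2*n))) ((3/16)*n + (-1/8)*d*(n/(d+2*n))) ((-5/32)*n + (-1/32)*n*(n/(d+2*n)) + (1/32)*d*(n/(d+2*n))) ((3/64)*n) 0 (1/2) (-(1/4)) ((n/(d+2*n)) - 3) ((3/2) : ℝ)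
      (by norm_num)
  have hfun : (fun x : ℝ => ((0 : ℝ)*x^5+(0 : ℝ)*x^4+((-1/8)*n + (1/8)*n*(n/(d+2*n)) + (1/8)*d*(n/(d+2*n)))*x^3+((3/16)*n + (-1/8)*d*(n/(d+2*n)))*x^2+((-5/32)*n + (-1/32)*n*(n/(d+2*n)) + (1/32)*d*(n/(d+2*n)))*x+((3/64)*n)) * (0*x^2+(1/2)*x+(-(1/4))) ^ ((n/(d+2*n)) - 3))
      = (fun x : ℝ => P1 d n (1/2) x (1/2)) := by
    funext x
    simp only [P1, G1]
    rw [show 0*x^2+(1/2)*x+(-(1/4)) = (1/2) * x - (1/2:ℝ)^2 from by ring]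
    ring
  rw [hfun] at hkey
  rw [hkey.deriv]
  rw [show 0*(3/2:ℝ)^2+(1/2)*(3/2:ℝ)+(-(1/4)) = (1/2:ℝ) from by norm_num]
  rw [show (n/(d+2*n)) - 3 - 1 = (n/(d+2*n)) - 4 from by ring]
  rw [show (n/(d+2*n)) - 3 = ((n/(d+2*n)) - 4) + 1 from by ring]
  rw [Real.rpow_add (by norm_num : (0:ℝ) < 1/2), Real.rpow_one]
  ring

lemma entry11 (d n : ℝ) :
    pd 1 (pd 1 (F d n)) (1/2) (3/2) (1/2)
      = ((1/16)*n + (-1/8)*n*(n/(d+2*n)) + (1/16)*n*(n/(d+2*n))^2 + (-1/32)*d*(n/(d+2*n)) + (1/32)*d*(n/(d+2*n))^2) * ((1/2:ℝ)) ^ ((n/(d+2*n)) - 4) := by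
  rw [pd1_apply]
  have hev : (fun t : ℝ => pd 1 (F d n) (1/2) t (1/2)) =ᶠ[nhds ((3/2) : ℝ)]
      (fun t : ℝ => P2 d n (1/2) t (1/2)) := by
    have hpos : ∀ᶠ t in nhds ((3/2) : ℝ), (0:ℝ) < (1/2) * t - (1/2:ℝ)^2 := by
      have hc : ContinuousAt (fun t : ℝ => (1/2) * t - (1/2:ℝ)^2) ((3/2) : ℝ) := by fun_prop
      exact ContinuousAt.eventually_lt continuousAt_const hc (by norm_num)
    filter_upwards [hpos] with t ht
    exact pdF1 d n (1/2) t (1/2) (by linarith [ht])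
  rw [hev.deriv_eq]
  have hkey := key (0 : ℝ) (0 : ℝ) (0 : ℝ) ((1/16)*n*(n/(d+2*n)) + (1/16)*d*(n/(d+2*n))) ((-1/16)*n + (-1/16)*d*(n/(d+2*n))) ((1/32)*n + (-1/64)*n*(n/(d+2*n)) + (1/64)*d*(n/(d+2*n))) 0 (1/2) (-(1/4)) ((n/(d+2*n)) - 3) ((3/2) : ℝ)
      (by norm_num)
  have hfun : (fun x : ℝ => ((0 : ℝ)*x^5+(0 : ℝ)*x^4+(0 : ℝ)*x^3+((1/16)*n*(n/(d+2*n)) + (1/16)*d*(n/(d+2*n)))*x^2+((-1/16)*n + (-1/16)*d*(n/(d+2*n)))*x+((1/32)*n + (-1/64)*n*(n/(d+2*n)) + (1/64)*d*(n/(d+2*n)))) * (0*x^2+(1/2)*x+(-(1/4))) ^ ((n/(d+2*n)) - 3))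
      = (fun x : ℝ => P2 d n (1/2) x (1/2)) := by
    funext x
    simp only [P2, G2]
    rw [show 0*x^2+(1/2)*x+(-(1/4)) = (1/2) * x - (1/2:ℝ)^2 from by ring]
    ring
  rw [hfun] at hkey
  rw [hkey.deriv]
  rw [show 0*(3/2:ℝ)^2+(1/2)*(3/2:ℝ)+(-(1/4)) = (1/2:ℝ) from by norm_num]
  rw [show (n/(d+2*n)) - 3 - 1 = (n/(d+2*n)) - 4 from by ring]
  rw [show (n/(d+2*n)) - 3 = ((n/(d+2*n)) - 4) + 1 from by ring]
  rw [Real.rpow_add (by norm_num : (0:ℝ) < 1/2), Real.rpow_one]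
  ring

lemma entry12 (d n : ℝ) :
    pd 1 (pd 2 (F d n)) (1/2) (3/2) (1/2)
      = ((-1/8)*n + (1/4)*n*(n/(d+2*n)) + (-1/8)*n*(n/(d+2*n))^2 + (1/16)*d*(n/(d+2*n)) + (-1/16)*d*(n/(d+2*n))^2) * ((1/2:ℝ)) ^ ((n/(d+2*n)) - 4) := by
  rw [pd1_apply]
  have hev : (fun t : ℝ => pd 2 (F d n) (1/2) t (1/2)) =ᶠ[nhds ((3/2) : ℝ)]
      (fun t : ℝ => P4 d n (1/2) t (1/2)) := by
    have hpos : ∀ᶠ t in nhds ((3/2) : ℝ), (0:ℝ) < (1/2) * t - (1/2:ℝ)^2 := by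
      have hc : ContinuousAt (fun t : ℝ => (1/2) * t - (1/2:ℝ)^2) ((3/2) : ℝ) := by fun_prop
      exact ContinuousAt.eventually_lt continuousAt_const hc (by norm_num)
    filter_upwards [hpos] with t ht
    exact pdF2 d n (1/2) t (1/2) (by linarith [ht])
  rw [hev.deriv_eq]
  have hkey := key (0 : ℝ) (0 : ℝ) (0 : ℝ) ((-1/8)*n*(n/(d+2*n)) + (-1/8)*d*(n/(d+2*n))) ((1/8)*n + (1/8)*d*(n/(d+2*n))) ((-1/16)*n + (1/32)*n*(n/(d+2*n)) + (-1/32)*d*(n/(d+2*n))) 0 (1/2) (-(1/4)) ((n/(d+2*n)) - 3) ((3/2) : ℝ)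
      (by norm_num)
  have hfun : (fun x : ℝ => ((0 : ℝ)*x^5+(0 : ℝ)*x^4+(0 : ℝ)*x^3+((-1/8)*n*(n/(d+2*n)) + (-1/8)*d*(n/(d+2*n)))*x^2+((1/8)*n + (1/8)*d*(n/(d+2*n)))*x+((-1/16)*n + (1/32)*n*(n/(d+2*n)) + (-1/32)*d*(n/(d+2*n)))) * (0*x^2+(1/2)*x+(-(1/4))) ^ ((n/(d+2*n)) - 3))
      = (fun x : ℝ => P4 d n (1/2) x (1/2)) := by
    funext x
    simp only [P4, G4]
    rw [show 0*x^2+(1/2)*x+(-(1/4)) = (1/2) * x - (1/2:ℝ)^2 from by ring]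
    ring
  rw [hfun] at hkey
  rw [hkey.deriv]
  rw [show 0*(3/2:ℝ)^2+(1/2)*(3/2:ℝ)+(-(1/4)) = (1/2:ℝ) from by norm_num]
  rw [show (n/(d+2*n)) - 3 - 1 = (n/(d+2*n)) - 4 from by ring]
  rw [show (n/(d+2*n)) - 3 = ((n/(d+2*n)) - 4) + 1 from by ring]
  rw [Real.rpow_add (by norm_num : (0:ℝ) < 1/2), Real.rpow_one]
  ring

lemma entry20 (d n : ℝ) :
    pd 2 (pd 0 (F d n)) (1/2) (3/2) (1/2)
      = ((-1/8)*n + (3/4)*n*(n/(d+2*n)) + (-3/8)*n*(n/(d+2*n))^2 + (3/16)*d*(n/(d+2*n)) + (-3/16)*d*(n/(d+2*n))^2) * ((1/2:ℝ)) ^ ((n/(d+2*n)) - 4) := by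
  rw [pd2_apply]
  have hev : (fun t : ℝ => pd 0 (F d n) (1/2) (3/2) t) =ᶠ[nhds ((1/2) : ℝ)]
      (fun t : ℝ => P1 d n (1/2) (3/2) t) := by
    have hpos : ∀ᶠ t in nhds ((1/2) : ℝ), (0:ℝ) < (1/2) * (3/2) - t^2 := by
      have hc : ContinuousAt (fun t : ℝ => (1/2) * (3/2) - t^2) ((1/2) : ℝ) := by fun_prop
      exact ContinuousAt.eventually_lt continuousAt_const hc (by norm_num)
    filter_upwards [hpos] with t ht
    exact pdF0 d n (1/2) (3/2) t (by linarith [ht])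
  rw [hev.deriv_eq]
  have hkey := key (0 : ℝ) ((-1/4)*n + (3/8)*n*(n/(d+2*n)) + (3/4)*d*(n/(d+2*n))) (0 : ℝ) (1*n + (-21/16)*n*(n/(d+2*n)) + (-9/8)*d*(n/(d+2*n))) (0 : ℝ) ((-27/64)*n + (87/128)*n*(n/(d+2*n)) + (27/64)*d*(n/(d+2*n))) (-1) 0 (3/4) ((n/(d+2*n)) - 3) ((1/2) : ℝ)
      (by norm_num)
  have hfun : (fun x : ℝ => ((0 : ℝ)*x^5+((-1/4)*n + (3/8)*n*(n/(d+2*n)) + (3/4)*d*(n/(d+2*n)))*x^4+(0 : ℝ)*x^3+(1*n + (-21/16)*n*(n/(d+2*n)) + (-9/8)*d*(n/(d+2*n)))*x^2+(0 : ℝ)*x+((-27/64)*n + (87/128)*n*(n/(d+2*n)) + (27/64)*d*(n/(d+2*n)))) * ((-1)*x^2+0*x+(3/4)) ^ ((n/(d+2*n)) - 3))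
      = (fun x : ℝ => P1 d n (1/2) (3/2) x) := by
    funext x
    simp only [P1, G1]
    rw [show (-1)*x^2+0*x+(3/4) = (1/2) * (3/2) - x^2 from by ring]
    ring
  rw [hfun] at hkey
  rw [hkey.deriv]
  rw [show (-1)*(1/2:ℝ)^2+0*(1/2:ℝ)+(3/4) = (1/2:ℝ) from by norm_num]
  rw [show (n/(d+2*n)) - 3 - 1 = (n/(d+2*n)) - 4 from by ring]
  rw [show (n/(d+2*n)) - 3 = ((n/(d+2*n)) - 4) + 1 from by ring]
  rw [Real.rpow_add (by norm_num : (0:ℝ) < 1/2), Real.rpow_one]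
  ring

lemma entry21 (d n : ℝ) :
    pd 2 (pd 1 (F d n)) (1/2) (3/2) (1/2)
      = ((-1/8)*n + (1/4)*n*(n/(d+2*n)) + (-1/8)*n*(n/(d+2*n))^2 + (1/16)*d*(n/(d+2*n)) + (-1/16)*d*(n/(d+2*n))^2) * ((1/2:ℝ)) ^ ((n/(d+2*n)) - 4) := by
  rw [pd2_apply]
  have hev : (fun t : ℝ => pd 1 (F d n) (1/2) (3/2) t) =ᶠ[nhds ((1/2) : ℝ)]
      (fun t : ℝ => P2 d n (1/2) (3/2) t) := by
    have hpos : ∀ᶠ t in nhds ((1/2) : ℝ), (0:ℝ) < (1/2) * (3/2) - t^2 := by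
      have hc : ContinuousAt (fun t : ℝ => (1/2) * (3/2) - t^2) ((1/2) : ℝ) := by fun_prop
      exact ContinuousAt.eventually_lt continuousAt_const hc (by norm_num)
    filter_upwards [hpos] with t ht
    exact pdF1 d n (1/2) (3/2) t (by linarith [ht])
  rw [hev.deriv_eq]
  have hkey := key (0 : ℝ) ((1/4)*n + (1/8)*n*(n/(d+2*n)) + (1/4)*d*(n/(d+2*n))) (0 : ℝ) ((-7/16)*n*(n/(d+2*n)) + (-3/8)*d*(n/(d+2*n))) (0 : ℝ) ((-5/64)*n + (29/128)*n*(n/(d+2*n)) + (9/64)*d*(n/(d+2*n))) (-1) 0 (3/4) ((n/(d+2*n)) - 3) ((1/2) : ℝ)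
      (by norm_num)
  have hfun : (fun x : ℝ => ((0 : ℝ)*x^5+((1/4)*n + (1/8)*n*(n/(d+2*n)) + (1/4)*d*(n/(d+2*n)))*x^4+(0 : ℝ)*x^3+((-7/16)*n*(n/(d+2*n)) + (-3/8)*d*(n/(d+2*n)))*x^2+(0 : ℝ)*x+((-5/64)*n + (29/128)*n*(n/(d+2*n)) + (9/64)*d*(n/(d+2*n)))) * ((-1)*x^2+0*x+(3/4)) ^ ((n/(d+2*n)) - 3))
      = (fun x : ℝ => P2 d n (1/2) (3/2) x) := by
    funext x
    simp only [P2, G2]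
    rw [show (-1)*x^2+0*x+(3/4) = (1/2) * (3/2) - x^2 from by ring]
    ring
  rw [hfun] at hkey
  rw [hkey.deriv]
  rw [show (-1)*(1/2:ℝ)^2+0*(1/2:ℝ)+(3/4) = (1/2:ℝ) from by norm_num]
  rw [show (n/(d+2*n)) - 3 - 1 = (n/(d+2*n)) - 4 from by ring]
  rw [show (n/(d+2*n)) - 3 = ((n/(d+2*n)) - 4) + 1 from by ring]
  rw [Real.rpow_add (by norm_num : (0:ℝ) < 1/2), Real.rpow_one]
  ring

lemma entry22 (d n : ℝ) :
    pd 2 (pd 2 (F d n)) (1/2) (3/2) (1/2)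
      = ((1/4)*n + (-3/4)*n*(n/(d+2*n)) + (1/4)*n*(n/(d+2*n))^2 + (-1/4)*d*(n/(d+2*n)) + (1/8)*d*(n/(d+2*n))^2) * ((1/2:ℝ)) ^ ((n/(d+2*n)) - 4) := by
  rw [pd2_apply]
  have hev : (fun t : ℝ => pd 2 (F d n) (1/2) (3/2) t) =ᶠ[nhds ((1/2) : ℝ)]
      (fun t : ℝ => P4 d n (1/2) (3/2) t) := by
    have hpos : ∀ᶠ t in nhds ((1/2) : ℝ), (0:ℝ) < (1/2) * (3/2) - t^2 := by
      have hc : ContinuousAt (fun t : ℝ => (1/2) * (3/2) - t^2) ((1/2) : ℝ) := by fun_prop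
      exact ContinuousAt.eventually_lt continuousAt_const hc (by norm_num)
    filter_upwards [hpos] with t ht
    exact pdF2 d n (1/2) (3/2) t (by linarith [ht])
  rw [hev.deriv_eq]
  have hkey := key ((-1/2)*n*(n/(d+2*n)) + (-1)*d*(n/(d+2*n))) (0 : ℝ) ((-1)*n + (7/4)*n*(n/(d+2*n)) + (3/2)*d*(n/(d+2*n))) (0 : ℝ) ((1/2)*n + (-29/32)*n*(n/(d+2*n)) + (-9/16)*d*(n/(d+2*n))) (0 : ℝ) (-1) 0 (3/4) ((n/(d+2*n)) - 3) ((1/2) : ℝ)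
      (by norm_num)
  have hfun : (fun x : ℝ => (((-1/2)*n*(n/(d+2*n)) + (-1)*d*(n/(d+2*n)))*x^5+(0 : ℝ)*x^4+((-1)*n + (7/4)*n*(n/(d+2*n)) + (3/2)*d*(n/(d+2*n)))*x^3+(0 : ℝ)*x^2+((1/2)*n + (-29/32)*n*(n/(d+2*n)) + (-9/16)*d*(n/(d+2*n)))*x+(0 : ℝ)) * ((-1)*x^2+0*x+(3/4)) ^ ((n/(d+2*n)) - 3))
      = (fun x : ℝ => P4 d n (1/2) (3/2) x) := by
    funext x
    simp only [P4, G4]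
    rw [show (-1)*x^2+0*x+(3/4) = (1/2) * (3/2) - x^2 from by ring]
    ring
  rw [hfun] at hkey
  rw [hkey.deriv]
  rw [show (-1)*(1/2:ℝ)^2+0*(1/2:ℝ)+(3/4) = (1/2:ℝ) from by norm_num]
  rw [show (n/(d+2*n)) - 3 - 1 = (n/(d+2*n)) - 4 from by ring]
  rw [show (n/(d+2*n)) - 3 = ((n/(d+2*n)) - 4) + 1 from by ring]
  rw [Real.rpow_add (by norm_num : (0:ℝ) < 1/2), Real.rpow_one]
  ring

lemma det_c (d n : ℝ) (hd : 0 < d) (hn : 0 < n) :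
    ((1/16)*n + (-9/8)*n*(n/(d+2*n)) + (9/16)*n*(n/(d+2*n))^2 + (-9/32)*d*(n/(d+2*n)) + (9/32)*d*(n/(d+2*n))^2)*((1/16)*n + (-1/8)*n*(n/(d+2*n)) + (1/16)*n*(n/(d+2*n))^2 + (-1/32)*d*(n/(d+2*n)) + (1/32)*d*(n/(d+2*n))^2)*((1/4)*n + (-3/4)*n*(n/(d+2*n)) + (1/4)*n*(n/(d+2*n))^2 + (-1/4)*d*(n/(d+2*n)) + (1/8)*d*(n/(d+2*n))^2) - ((1/16)*n + (-9/8)*n*(n/(d+2*n)) + (9/16)*n*(n/(d+2*n))^2 + (-9/32)*d*(n/(d+2*n)) + (9/32)*d*(n/(d+2*n))^2)*((-1/8)*n + (1/4)*n*(n/(d+2*n)) + (-1/8)*n*(n/(d+2*n))^2 + (1/16)*d*(n/(d+2*n)) + (-1/16)*d*(n/(d+2*n))^2)*((-1/8)*n + (1/4)*n*(n/(d+2*n)) + (-1/8)*n*(n/(d+2*n))^2 + (1/16)*d*(n/(d+2*n)) + (-1/16)*d*(n/(d+2*n))^2)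
      - ((1/16)*n + (-1/4)*n*(n/(d+2*n)) + (3/16)*n*(n/(d+2*n))^2 + (-1/32)*d*(n/(d+2*n)) + (3/32)*d*(n/(d+2*n))^2)*((1/16)*n + (-1/4)*n*(n/(d+2*n)) + (3/16)*n*(n/(d+2*n))^2 + (-1/32)*d*(n/(d+2*n)) + (3/32)*d*(n/(d+2*n))^2)*((1/4)*n + (-3/4)*n*(n/(d+2*n)) + (1/4)*n*(n/(d+2*n))^2 + (-1/4)*d*(n/(d+2*n)) + (1/8)*d*(n/(d+2*n))^2) + ((1/16)*n + (-1/4)*n*(n/(d+2*n)) + (3/16)*n*(n/(d+2*n))^2 + (-1/32)*d*(n/(d+2*n)) + (3/32)*d*(n/(d+2*n))^2)*((-1/8)*n + (1/4)*n*(n/(d+2*n)) + (-1/8)*n*(n/(d+2*n))^2 + (1/16)*d*(n/(d+2*n)) + (-1/16)*d*(n/(d+2*n))^2)*((-1/8)*n + (3/4)*n*(n/(d+2*n)) + (-3/8)*n*(n/(d+2*n))^2 + (3/16)*d*(n/(d+2*n)) + (-3/16)*d*(n/(d+2*n))^2)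
      + ((-1/8)*n + (3/4)*n*(n/(d+2*n)) + (-3/8)*n*(n/(d+2*n))^2 + (3/16)*d*(n/(d+2*n)) + (-3/16)*d*(n/(d+2*n))^2)*((1/16)*n + (-1/4)*n*(n/(d+2*n)) + (3/16)*n*(n/(d+2*n))^2 + (-1/32)*d*(n/(d+2*n)) + (3/32)*d*(n/(d+2*n))^2)*((-1/8)*n + (1/4)*n*(n/(d+2*n)) + (-1/8)*n*(n/(d+2*n))^2 + (1/16)*d*(n/(d+2*n)) + (-1/16)*d*(n/(d+2*n))^2) - ((-1/8)*n + (3/4)*n*(n/(d+2*n)) + (-3/8)*n*(n/(d+2*n))^2 + (3/16)*d*(n/(d+2*n)) + (-3/16)*d*(n/(d+2*n))^2)*((1/16)*n + (-1/8)*n*(n/(d+2*n)) + (1/16)*n*(n/(d+2*n))^2 + (-1/32)*d*(n/(d+2*n)) + (1/32)*d*(n/(d+2*n))^2)*((-1/8)*n + (3/4)*n*(n/(d+2*n)) + (-3/8)*n*(n/(d+2*n))^2 + (3/16)*d*(n/(d+2*n)) + (-3/16)*d*(n/(d+2*n))^2) = n^3/2048 := by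
  have hdn : d + 2*n ≠ 0 := by positivity
  have ha : (n/(d+2*n)) * d + 2*n*(n/(d+2*n)) - n = 0 := by field_simp; ring
  linear_combination ((1/2048)*n^2 + (1/1024)*n^2*(n/(d+2*n)) + (-3/512)*n^2*(n/(d+2*n))^2 + (1/256)*n^2*(n/(d+2*n))^3 + (1/2048)*d*n*(n/(d+2*n)) + (-1/256)*d*n*(n/(d+2*n))^2 + (1/256)*d*n*(n/(d+2*n))^3 + (-1/2048)*d^2*(n/(d+2*n))^2 + (1/1024)*d^2*(n/(d+2*n))^3) * ha

lemma hX_cube (y : ℝ) :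
    ((1/2:ℝ)) ^ (y - 4) * ((1/2:ℝ)) ^ (y - 4) * ((1/2:ℝ)) ^ (y - 4)
      = (2:ℝ) ^ (-(3*y)) * 4096 := by
  rw [← Real.rpow_add (by norm_num : (0:ℝ) < 1/2), ← Real.rpow_add (by norm_num : (0:ℝ) < 1/2)]
  rw [show (1/2:ℝ) = 2⁻¹ from by norm_num]
  rw [Real.inv_rpow (by norm_num : (0:ℝ) ≤ 2), ← Real.rpow_neg (by norm_num : (0:ℝ) ≤ 2)]
  rw [show -(y - 4 + (y - 4) + (y - 4)) = -(3*y) + 12 from by ring]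
  rw [Real.rpow_add (by norm_num : (0:ℝ) < 2)]
  rw [show ((12:ℝ)) = ((12:ℕ):ℝ) from by norm_num, Real.rpow_natCast]
  norm_num

/-- The determinant of the Hessian of `F` at `(1/2, 3/2, 1/2)` is positive, so the
critical point corresponding to the Einstein metric `g5` is non-degenerate. -/
theorem g5_hess_det (d n : ℝ) (hd : 0 < d) (hn : 0 < n) :
    (Hess (F d n) (1/2) (3/2) (1/2)).det =
      2 * ((2 : ℝ) ^ (-n)) ^ ((3 : ℝ) / (d + 2 * n)) * n ^ 3 ∧
    0 < (Hess (F d n) (1/2) (3/2) (1/2)).det := by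
  have hdn : (0:ℝ) < d + 2*n := by linarith
  have hexp : ((2:ℝ) ^ (-n)) ^ ((3:ℝ)/(d+2*n)) = (2:ℝ) ^ (-(3*(n/(d+2*n)))) := by
    rw [← Real.rpow_mul (by norm_num : (0:ℝ) ≤ 2)]
    rw [show (-n) * ((3:ℝ)/(d+2*n)) = -(3*(n/(d+2*n))) from by ring]
  have h1 : (Hess (F d n) (1/2) (3/2) (1/2)).det =
      2 * ((2 : ℝ) ^ (-n)) ^ ((3 : ℝ) / (d + 2 * n)) * n ^ 3 := by
    rw [Matrix.det_fin_three]
    simp only [Hess, Matrix.of_apply]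
    rw [entry00 d n, entry01 d n, entry02 d n, entry10 d n, entry11 d n, entry12 d n,
      entry20 d n, entry21 d n, entry22 d n]
    rw [hexp]
    have hdet := det_c d n hd hn
    have hX := hX_cube ((n/(d+2*n)))
    linear_combination (((1/2:ℝ)) ^ ((n/(d+2*n)) - 4) * ((1/2:ℝ)) ^ ((n/(d+2*n)) - 4)
        * ((1/2:ℝ)) ^ ((n/(d+2*n)) - 4)) * hdet + (n^3/2048) * hX
  refine ⟨h1, h1 ▸ ?_⟩
  have hpos : (0:ℝ) < ((2:ℝ) ^ (-n)) ^ ((3:ℝ)/(d+2*n)) :=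
    Real.rpow_pos_of_pos (Real.rpow_pos_of_pos two_pos _) _
  exact mul_pos (mul_pos two_pos hpos) (pow_pos hn 3)
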